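/- arXiv:2602.13281 — 3 statements merged into one kernel-verified Lean document; each statement's English description precedes it below -/
import Mathlib

section
/- Let M be an n×n nonnegative irreducible real matrix (n ≥ 1). Then the spectral radius ρ(M) is a strictly positive real eigenvalue of M, and there exists an entrywise strictly positive vector x ∈ ℝⁿ with M x = ρ(M) x. -/
/-!
For large `m`, irreducibility makes `B = ∑ k ≤ m, A ^ k` entrywise positive, and `B` commutes
with `A`. The Collatz–Wielandt function `x ↦ min_i (A x)_i / x_i` attains its maximum `r` on the
compact set of vectors `B y`, `y` in the standard simplex. Since `B` strictly increases the
function at any positive vector that is not an eigenvector, the maximiser `x` is a positive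
eigenvector with eigenvalue `r`, and `r > 0` because every row of `A` has a positive entry.
Finally, if `v A = z v` with `v ≠ 0`, then `|z| |v| ≤ |v| A` entrywise, and pairing with `x`
gives `|z| ≤ r`, so `r` is the spectral radius.
-/

/-- A real square matrix is (entrywise) nonnegative. -/
def Matrix.IsNonneg {n : ℕ} (M : Matrix (Fin n) (Fin n) ℝ) : Prop :=
  ∀ i j, 0 ≤ M i j

/-- A nonnegative matrix is irreducible if for every pair of indices `(i, j)` there is a
positive power of the matrix whose `(i, j)` entry is positive. -/
def Matrix.IsIrred {n : ℕ} (M : Matrix (Fin n) (Fin n) ℝ) : Prop :=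
  ∀ i j, ∃ k : ℕ, 0 < k ∧ 0 < (M ^ k) i j

/-- The spectral radius of a real square matrix: the maximum of the absolute values of its
complex eigenvalues (the complex roots of its characteristic polynomial). -/
noncomputable def Matrix.specRad {n : ℕ} (M : Matrix (Fin n) (Fin n) ℝ) : ℝ :=
  sSup {r : ℝ | ∃ z : ℂ, (Polynomial.aeval z) M.charpoly = 0 ∧ r = ‖z‖}

open Finset

variable {ι : Type*} [Fintype ι]

lemma inv_sum_smul_mem_stdSimplex {x : ι → ℝ} (hx : 0 ≤ x) (hsum : 0 < ∑ i, x i) :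
    (∑ i, x i)⁻¹ • x ∈ stdSimplex ℝ ι :=
  ⟨fun i => mul_nonneg (inv_nonneg.mpr hsum.le) (hx i), by
    simp only [Pi.smul_apply, smul_eq_mul, ← mul_sum, inv_mul_cancel₀ hsum.ne']⟩

namespace Matrix

lemma mulVec_apply_pos {A : Matrix ι ι ℝ} {x : ι → ℝ} {i l : ι} (hA : ∀ j, 0 ≤ A i j)
    (hx : 0 ≤ x) (hl : 0 < A i l) (hxl : 0 < x l) : 0 < (A *ᵥ x) i :=
  sum_pos' (fun j _ => mul_nonneg (hA j) (hx j)) ⟨l, mem_univ l, mul_pos hl hxl⟩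

lemma mulVec_apply_pos_of_pos {B : Matrix ι ι ℝ} (hB : ∀ i j, 0 < B i j) {x : ι → ℝ}
    (hx : 0 ≤ x) (hx0 : x ≠ 0) (i : ι) : 0 < (B *ᵥ x) i := by
  obtain ⟨l, hl⟩ := Function.ne_iff.mp hx0
  exact mulVec_apply_pos (fun j => (hB i j).le) hx (hB i l) ((hx l).lt_of_ne' hl)

lemma exists_pos_apply_of_pow_apply_pos [DecidableEq ι] {A : Matrix ι ι ℝ}
    (hA : ∀ i j, 0 ≤ A i j) {k : ℕ} (hk : 0 < k) {i j : ι} (h : 0 < (A ^ k) i j) :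
    ∃ l, 0 < A i l := by
  by_contra! hrow
  obtain ⟨k, rfl⟩ := Nat.exists_eq_add_of_lt hk
  rw [zero_add, pow_succ', mul_apply,
    sum_eq_zero fun l _ => by rw [le_antisymm (hrow l) (hA i l), zero_mul]] at h
  exact h.false

lemma exists_pos_commute_of_forall_exists_pow_pos [DecidableEq ι] {A : Matrix ι ι ℝ}
    (hA : ∀ i j, 0 ≤ A i j) (h : ∀ i j, ∃ k : ℕ, 0 < (A ^ k) i j) :
    ∃ B : Matrix ι ι ℝ, (∀ i j, 0 < B i j) ∧ Commute A B := by
  choose κ hκ using h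
  refine ⟨∑ k ∈ range (univ.sup (fun p : ι × ι => κ p.1 p.2) + 1), A ^ k, fun i j => ?_,
    Commute.sum_right _ _ _ fun k _ => Commute.self_pow A k⟩
  rw [sum_apply]
  refine sum_pos' (fun k _ => pow_apply_nonneg hA k i j) ⟨κ i j, ?_, hκ i j⟩
  exact mem_range_succ_iff.mpr (le_sup (f := fun p : ι × ι => κ p.1 p.2) (mem_univ (i, j)))

section CollatzWielandt

variable [Nonempty ι] {A B : Matrix ι ι ℝ} {x : ι → ℝ}

noncomputable def collatzWielandt (A : Matrix ι ι ℝ) (x : ι → ℝ) : ℝ :=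
  univ.inf' univ_nonempty fun i => (A *ᵥ x) i / x i

lemma lt_collatzWielandt_iff (hx : ∀ i, 0 < x i) {r : ℝ} :
    r < collatzWielandt A x ↔ ∀ i, r * x i < (A *ᵥ x) i := by
  simp only [collatzWielandt, lt_inf'_iff, mem_univ, true_implies, lt_div_iff₀ (hx _)]

lemma collatzWielandt_mul_le (hx : ∀ i, 0 < x i) (i : ι) :
    collatzWielandt A x * x i ≤ (A *ᵥ x) i :=
  (le_div_iff₀ (hx i)).mp (inf'_le _ (mem_univ i))

lemma collatzWielandt_smul {c : ℝ} (hc : 0 < c) (x : ι → ℝ) :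
    collatzWielandt A (c • x) = collatzWielandt A x := by
  refine inf'_congr _ rfl fun i _ => ?_
  rw [mulVec_smul, Pi.smul_apply, Pi.smul_apply, smul_eq_mul, smul_eq_mul,
    mul_div_mul_left _ _ hc.ne']

lemma continuousOn_collatzWielandt :
    ContinuousOn (collatzWielandt A) {x | ∀ i, 0 < x i} :=
  ContinuousOn.finset_inf'_apply _ fun i _ =>
    ((continuous_apply i).comp (continuous_const.matrix_mulVec continuous_id)).continuousOn.div
      (continuous_apply i).continuousOn fun _ hx => (hx i).ne'

lemma collatzWielandt_lt_collatzWielandt_mulVec (hB : ∀ i j, 0 < B i j) (hAB : Commute A B)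
    (hx : ∀ i, 0 < x i) (hne : A *ᵥ x ≠ collatzWielandt A x • x) :
    collatzWielandt A x < collatzWielandt A (B *ᵥ x) := by
  set r := collatzWielandt A x
  have hgap : 0 ≤ A *ᵥ x - r • x := fun i => sub_nonneg.mpr (collatzWielandt_mul_le hx i)
  have hBx : ∀ i, 0 < (B *ᵥ x) i :=
    mulVec_apply_pos_of_pos hB (fun i => (hx i).le) fun h =>
      (hx ‹Nonempty ι›.some).ne' (congrFun h _)
  have hB_gap : B *ᵥ (A *ᵥ x - r • x) = A *ᵥ (B *ᵥ x) - r • B *ᵥ x := by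
    rw [mulVec_sub, mulVec_smul, mulVec_mulVec, mulVec_mulVec, hAB.eq]
  refine (lt_collatzWielandt_iff hBx).mpr fun i => ?_
  have hpos := mulVec_apply_pos_of_pos hB hgap (sub_ne_zero.mpr hne) i
  rw [hB_gap, Pi.sub_apply, Pi.smul_apply, smul_eq_mul] at hpos
  linarith

lemma exists_pos_eigenvector_of_commute (hB : ∀ i j, 0 < B i j) (hAB : Commute A B) :
    ∃ x : ι → ℝ, (∀ i, 0 < x i) ∧ A *ᵥ x = collatzWielandt A x • x := by
  set K := (B *ᵥ ·) '' stdSimplex ℝ ι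
  have hK_pos : K ⊆ {x | ∀ i, 0 < x i} := by
    rintro _ ⟨s, hs, rfl⟩
    exact mulVec_apply_pos_of_pos hB hs.1 fun h => by simpa [h] using hs.2
  have hK_compact : IsCompact K :=
    (isCompact_stdSimplex ℝ ι).image (continuous_const.matrix_mulVec continuous_id)
  have hK_nonempty : K.Nonempty := by
    classical exact ⟨_, _, single_mem_stdSimplex ℝ ‹Nonempty ι›.some, rfl⟩
  obtain ⟨x, hxK, hmax⟩ :=
    hK_compact.exists_isMaxOn hK_nonempty (continuousOn_collatzWielandt.mono hK_pos)
  have hx := hK_pos hxK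
  refine ⟨x, hx, by_contra fun hne => ?_⟩
  have hsum : 0 < ∑ i, x i := sum_pos (fun i _ => hx i) univ_nonempty
  have hBxK : (∑ i, x i)⁻¹ • B *ᵥ x ∈ K :=
    ⟨_, inv_sum_smul_mem_stdSimplex (fun i => (hx i).le) hsum, mulVec_smul _ _ _⟩
  have hle := hmax hBxK
  rw [Set.mem_ofPred_eq, collatzWielandt_smul (inv_pos.mpr hsum)] at hle
  exact (collatzWielandt_lt_collatzWielandt_mulVec hB hAB hx hne).not_ge hle

end CollatzWielandt

section Spectrum

variable [DecidableEq ι]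

lemma exists_vecMul_eq_smul_of_aeval_charpoly_eq_zero {R K : Type*} [CommRing R] [Field K]
    [Algebra R K] {A : Matrix ι ι R} {z : K} (hz : Polynomial.aeval z A.charpoly = 0) :
    ∃ v ≠ 0, v ᵥ* A.map (algebraMap R K) = z • v := by
  rw [Polynomial.aeval_def, Polynomial.eval₂_eq_eval_map, ← charpoly_map, eval_charpoly,
    ← exists_vecMul_eq_zero_iff] at hz
  obtain ⟨v, hv, hv0⟩ := hz
  refine ⟨v, hv, ?_⟩
  rw [vecMul_sub, sub_eq_zero] at hv0
  ext i
  simp [← hv0, vecMul_diagonal, mul_comm]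

lemma aeval_charpoly_eq_zero_of_mulVec_eq_smul {A : Matrix ι ι ℝ} {x : ι → ℝ} {r : ℝ}
    (hx : x ≠ 0) (hAx : A *ᵥ x = r • x) : Polynomial.aeval (r : ℂ) A.charpoly = 0 := by
  have : A.charpoly.eval r = 0 := by
    rw [eval_charpoly, ← exists_mulVec_eq_zero_iff]
    exact ⟨x, hx, by ext i; simp [sub_mulVec, hAx]⟩
  rw [← Complex.coe_algebraMap, Polynomial.aeval_algebraMap_apply_eq_algebraMap_eval, this,
    map_zero]

lemma norm_le_of_aeval_charpoly_eq_zero {A : Matrix ι ι ℝ} (hA : ∀ i j, 0 ≤ A i j)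
    {x : ι → ℝ} (hx : ∀ i, 0 < x i) {r : ℝ} (hAx : A *ᵥ x = r • x) {z : ℂ}
    (hz : Polynomial.aeval z A.charpoly = 0) : ‖z‖ ≤ r := by
  obtain ⟨v, hv0, hv⟩ := exists_vecMul_eq_smul_of_aeval_charpoly_eq_zero hz
  set u : ι → ℝ := fun i => ‖v i‖
  have hu : ‖z‖ • u ≤ u ᵥ* A := fun j => calc
    ‖z‖ * ‖v j‖ = ‖∑ i, v i * A i j‖ := by
      rw [← norm_mul, ← smul_eq_mul, ← Pi.smul_apply, ← hv]; rfl
    _ ≤ ∑ i, ‖v i‖ * A i j := by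
      refine (norm_sum_le _ _).trans_eq (sum_congr rfl fun i _ => ?_)
      rw [norm_mul, Complex.norm_real, Real.norm_of_nonneg (hA i j)]
  have hux : 0 < u ⬝ᵥ x := by
    obtain ⟨l, hl⟩ := Function.ne_iff.mp hv0
    exact sum_pos' (fun i _ => mul_nonneg (norm_nonneg _) (hx i).le)
      ⟨l, mem_univ l, mul_pos (norm_pos_iff.mpr hl) (hx l)⟩
  refine le_of_mul_le_mul_right ?_ hux
  calc ‖z‖ * (u ⬝ᵥ x) = (‖z‖ • u) ⬝ᵥ x := by rw [smul_dotProduct, smul_eq_mul]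
    _ ≤ (u ᵥ* A) ⬝ᵥ x := dotProduct_le_dotProduct_of_nonneg_right hu fun i => (hx i).le
    _ = r * (u ⬝ᵥ x) := by rw [← dotProduct_mulVec, hAx, dotProduct_smul, smul_eq_mul]

end Spectrum

lemma specRad_eq_of_mulVec_eq_smul {n : ℕ} [NeZero n] {A : Matrix (Fin n) (Fin n) ℝ}
    (hA : ∀ i j, 0 ≤ A i j) {x : Fin n → ℝ} (hx : ∀ i, 0 < x i) {r : ℝ}
    (hAx : A *ᵥ x = r • x) : A.specRad = r := by
  have hr := aeval_charpoly_eq_zero_of_mulVec_eq_smul (fun h => (hx 0).ne' (congrFun h 0)) hAx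
  have hr_norm : ‖(r : ℂ)‖ = r :=
    le_antisymm (norm_le_of_aeval_charpoly_eq_zero hA hx hAx hr)
      (Complex.norm_real r ▸ le_abs_self r)
  refine IsGreatest.csSup_eq ⟨⟨r, hr, hr_norm.symm⟩, ?_⟩
  rintro _ ⟨z, hz, rfl⟩
  exact norm_le_of_aeval_charpoly_eq_zero hA hx hAx hz

end Matrix

/-- Perron–Frobenius: the spectral radius of a nonnegative irreducible matrix is a strictly
positive real eigenvalue, with an entrywise strictly positive eigenvector. -/
theorem perron_frobenius_positive_eigenvector {n : ℕ} (hn : 1 ≤ n)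
    (M : Matrix (Fin n) (Fin n) ℝ) (hM : M.IsNonneg) (hirr : M.IsIrred) :
    0 < M.specRad ∧
      ∃ x : Fin n → ℝ, (∀ i, 0 < x i) ∧ M.mulVec x = M.specRad • x := by
  have : NeZero n := ⟨by omega⟩
  obtain ⟨B, hB, hMB⟩ :=
    Matrix.exists_pos_commute_of_forall_exists_pow_pos hM fun i j =>
      (hirr i j).imp fun _ => And.right
  obtain ⟨x, hx, hMx⟩ := Matrix.exists_pos_eigenvector_of_commute hB hMB
  have hr : 0 < M.collatzWielandt x := (Matrix.lt_collatzWielandt_iff hx).mpr fun i => by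
    obtain ⟨k, hk, hpos⟩ := hirr i i
    obtain ⟨l, hl⟩ := Matrix.exists_pos_apply_of_pow_apply_pos hM hk hpos
    simpa using Matrix.mulVec_apply_pos (hM i) (fun j => (hx j).le) hl (hx l)
  rw [Matrix.specRad_eq_of_mulVec_eq_smul hM hx hMx]
  exact ⟨hr, x, hx, hMx⟩
end

section
/- Let M be an n×n nonnegative irreducible real matrix. If y ∈ ℝⁿ is entrywise strictly positive and M y = μ y for some real number μ, then μ = ρ(M). Moreover, any two entrywise strictly positive eigenvectors of M are scalar multiples of each other. -/
open Polynomial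

namespace Matrix

variable {ι : Type*} [Fintype ι]

theorem isRoot_charpoly_iff_exists_mulVec_eq_smul [DecidableEq ι] {K : Type*} [Field K]
    (A : Matrix ι ι K) (z : K) : A.charpoly.IsRoot z ↔ ∃ v ≠ 0, A *ᵥ v = z • v := by
  rw [IsRoot, eval_charpoly, ← exists_mulVec_eq_zero_iff]
  simp only [sub_mulVec, scalar_apply, ← smul_one_eq_diagonal, smul_mulVec, one_mulVec,
    sub_eq_zero, eq_comm]

theorem pow_mulVec_of_mulVec_eq_smul [DecidableEq ι] {R : Type*} [CommSemiring R]
    {A : Matrix ι ι R} {v : ι → R} {μ : R} (h : A *ᵥ v = μ • v) (k : ℕ) :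
    (A ^ k) *ᵥ v = μ ^ k • v := by
  induction k with
  | zero => simp
  | succ k ih => rw [pow_succ, ← mulVec_mulVec, h, mulVec_smul, ih, smul_smul, pow_succ']

theorem mulVec_apply_mono {A : Matrix ι ι ℝ} (hA : ∀ i j, 0 ≤ A i j) {v w : ι → ℝ}
    (hvw : ∀ j, v j ≤ w j) (i : ι) : (A *ᵥ v) i ≤ (A *ᵥ w) i :=
  Finset.sum_le_sum fun j _ => mul_le_mul_of_nonneg_left (hvw j) (hA i j)

theorem mulVec_apply_nonneg {A : Matrix ι ι ℝ} (hA : ∀ i j, 0 ≤ A i j) {w : ι → ℝ}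
    (hw : ∀ j, 0 ≤ w j) (i : ι) : 0 ≤ (A *ᵥ w) i := by
  simpa using mulVec_apply_mono hA (v := 0) hw i

theorem eigenvalue_nonneg_of_pos_eigenvector [Nonempty ι] {A : Matrix ι ι ℝ}
    (hA : ∀ i j, 0 ≤ A i j) {y : ι → ℝ} {μ : ℝ} (hy : ∀ i, 0 < y i) (hAy : A *ᵥ y = μ • y) :
    0 ≤ μ := by
  obtain ⟨i⟩ := ‹Nonempty ι›
  have : 0 ≤ μ * y i := by
    simpa [hAy] using mulVec_apply_nonneg hA (fun j => (hy j).le) i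
  exact nonneg_of_mul_nonneg_left this (hy i)

theorem norm_mul_norm_le_mulVec_norm {A : Matrix ι ι ℝ} (hA : ∀ i j, 0 ≤ A i j) {v : ι → ℂ}
    {z : ℂ} (hAv : A.map (algebraMap ℝ ℂ) *ᵥ v = z • v) (i : ι) :
    ‖z‖ * ‖v i‖ ≤ (A *ᵥ fun j => ‖v j‖) i := calc
  ‖z‖ * ‖v i‖ = ‖∑ j, (A i j : ℂ) * v j‖ := by
    rw [← norm_mul, ← smul_eq_mul, ← Pi.smul_apply, ← hAv]; rfl
  _ ≤ ∑ j, ‖(A i j : ℂ) * v j‖ := norm_sum_le _ _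
  _ = (A *ᵥ fun j => ‖v j‖) i := by
    simp only [norm_mul, Complex.norm_real, Real.norm_of_nonneg (hA i _)]; rfl

theorem le_eigenvalue_of_smul_le_mulVec {A : Matrix ι ι ℝ} (hA : ∀ i j, 0 ≤ A i j)
    {w y : ι → ℝ} {r μ : ℝ} (hw : ∀ i, 0 ≤ w i) (hw0 : w ≠ 0)
    (hrw : ∀ i, r * w i ≤ (A *ᵥ w) i) (hy : ∀ i, 0 < y i) (hAy : A *ᵥ y = μ • y) :
    r ≤ μ := by
  obtain ⟨j, hj⟩ := Function.ne_iff.mp hw0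
  have : Nonempty ι := ⟨j⟩
  obtain ⟨i, hi⟩ := Finite.exists_max fun k => w k / y k
  set t := w i / y i
  have hwt : ∀ k, w k ≤ (t • y) k := fun k => (div_le_iff₀ (hy k)).mp (hi k)
  have ht : 0 < t := (div_pos ((hw j).lt_of_ne' hj) (hy j)).trans_le (hi j)
  have hwi : w i = t * y i := (div_mul_cancel₀ _ (hy i).ne').symm
  have key : r * (t * y i) ≤ μ * (t * y i) := calc
    r * (t * y i) ≤ (A *ᵥ w) i := hwi ▸ hrw i
    _ ≤ (A *ᵥ (t • y)) i := mulVec_apply_mono hA hwt i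
    _ = μ * (t * y i) := by
      rw [mulVec_smul, hAy]; simp only [Pi.smul_apply, smul_eq_mul]; ring
  exact le_of_mul_le_mul_right key (mul_pos ht (hy i))

theorem norm_le_eigenvalue_of_pos_eigenvector [DecidableEq ι] {A : Matrix ι ι ℝ}
    (hA : ∀ i j, 0 ≤ A i j) {y : ι → ℝ} {μ : ℝ} (hy : ∀ i, 0 < y i) (hAy : A *ᵥ y = μ • y)
    {z : ℂ} (hz : aeval z A.charpoly = 0) : ‖z‖ ≤ μ := by
  have hroot : (A.map (algebraMap ℝ ℂ)).charpoly.IsRoot z := by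
    rwa [IsRoot, charpoly_map, eval_map, ← aeval_def]
  obtain ⟨v, hv0, hAv⟩ := (isRoot_charpoly_iff_exists_mulVec_eq_smul _ z).mp hroot
  refine le_eigenvalue_of_smul_le_mulVec hA (fun i => norm_nonneg (v i)) ?_
    (norm_mul_norm_le_mulVec_norm hA hAv) hy hAy
  obtain ⟨j, hj⟩ := Function.ne_iff.mp hv0
  exact Function.ne_iff.mpr ⟨j, norm_ne_zero_iff.mpr hj⟩

theorem specRad_eq_of_pos_eigenvector {n : ℕ} (hn : 0 < n) {A : Matrix (Fin n) (Fin n) ℝ}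
    (hA : A.IsNonneg) {y : Fin n → ℝ} {μ : ℝ} (hy : ∀ i, 0 < y i) (hAy : A *ᵥ y = μ • y) :
    A.specRad = μ := by
  have : Nonempty (Fin n) := ⟨⟨0, hn⟩⟩
  refine IsGreatest.csSup_eq ⟨⟨μ, ?_, ?_⟩, ?_⟩
  · have hroot : A.charpoly.IsRoot μ :=
      (isRoot_charpoly_iff_exists_mulVec_eq_smul A μ).mpr
        ⟨y, Function.ne_iff.mpr ⟨⟨0, hn⟩, (hy _).ne'⟩, hAy⟩
    rw [← Complex.coe_algebraMap, aeval_algebraMap_apply, coe_aeval_eq_eval,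
      hroot.eq_zero, map_zero]
  · rw [Complex.norm_real, Real.norm_of_nonneg (eigenvalue_nonneg_of_pos_eigenvector hA hy hAy)]
  · rintro r ⟨z, hz, rfl⟩
    exact norm_le_eigenvalue_of_pos_eigenvector hA hy hAy hz

theorem IsIrreducible.eq_zero_of_mulVec_eq_smul_of_apply_eq_zero [DecidableEq ι] {A : Matrix ι ι ℝ}
    (hA : A.IsIrreducible) {w : ι → ℝ} {μ : ℝ} (hw : ∀ i, 0 ≤ w i) (hAw : A *ᵥ w = μ • w)
    {i : ι} (hwi : w i = 0) : w = 0 := by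
  funext j
  obtain ⟨k, -, hk⟩ := (isIrreducible_iff_exists_pow_pos hA.nonneg).mp hA i j
  have hsum : ((A ^ k) *ᵥ w) i = 0 := by
    simp [pow_mulVec_of_mulVec_eq_smul hAw, hwi]
  have hterm : (A ^ k) i j * w j ≤ ((A ^ k) *ᵥ w) i :=
    Finset.single_le_sum (fun l _ => mul_nonneg (pow_apply_nonneg hA.nonneg k i l) (hw l))
      (Finset.mem_univ j)
  exact le_antisymm (nonpos_of_mul_nonpos_right (hsum ▸ hterm) hk) (hw j)

theorem IsIrreducible.exists_eq_smul_of_pos_eigenvector [DecidableEq ι] {A : Matrix ι ι ℝ}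
    (hA : A.IsIrreducible) {y z : ι → ℝ} {μ : ℝ} (hy : ∀ i, 0 < y i) (hAy : A *ᵥ y = μ • y)
    (hAz : A *ᵥ z = μ • z) : ∃ c : ℝ, z = c • y := by
  cases isEmpty_or_nonempty ι
  · exact ⟨0, Subsingleton.elim _ _⟩
  obtain ⟨i, hi⟩ := Finite.exists_min fun k => z k / y k
  set c := z i / y i
  refine ⟨c, sub_eq_zero.mp
    (hA.eq_zero_of_mulVec_eq_smul_of_apply_eq_zero (μ := μ) (i := i) ?_ ?_ ?_)⟩
  · intro k
    simpa using (le_div_iff₀ (hy k)).mp (hi k)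
  · rw [mulVec_sub, mulVec_smul, hAy, hAz, smul_sub, smul_comm]
  · simp [c, div_mul_cancel₀ _ (hy i).ne']

end Matrix

/-- For a nonnegative irreducible matrix, a strictly positive eigenvector can only correspond
to the spectral radius, and any two strictly positive eigenvectors are proportional. -/
theorem positive_eigenvector_unique {n : ℕ} (hn : 0 < n)
    (M : Matrix (Fin n) (Fin n) ℝ) (hM : M.IsNonneg) (hirr : M.IsIrred) :
    (∀ (y : Fin n → ℝ) (μ : ℝ), (∀ i, 0 < y i) → M.mulVec y = μ • y → μ = M.specRad) ∧
      (∀ (y z : Fin n → ℝ) (μ ν : ℝ), (∀ i, 0 < y i) → (∀ i, 0 < z i) →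
        M.mulVec y = μ • y → M.mulVec z = ν • z → ∃ c : ℝ, z = c • y) := by
  have hspec := fun (y : Fin n → ℝ) (μ : ℝ) (hy : ∀ i, 0 < y i) (hMy : M.mulVec y = μ • y) =>
    (Matrix.specRad_eq_of_pos_eigenvector hn hM hy hMy).symm
  refine ⟨hspec, fun y z μ ν hy hz hMy hMz => ?_⟩
  obtain rfl : μ = ν := (hspec y μ hy hMy).trans (hspec z ν hz hMz).symm
  exact ((Matrix.isIrreducible_iff_exists_pow_pos hM).mpr hirr).exists_eq_smul_of_pos_eigenvector
    hy hMy hMz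
end

section
/- Let M be an n×n nonnegative irreducible real matrix and let f ∈ ℝⁿ be a nonnegative vector. If x ∈ ℝⁿ is nonnegative, x ≠ 0, and (I − M) x = f, then x is entrywise strictly positive and ρ(M) ≤ 1. -/
/-!
Since `f ≥ 0`, the solution satisfies `M x ≤ x`, hence `M^k x ≤ x` for all `k`. A zero entry
`x i = 0` would then force `(M^k)_{ij} x_j = 0` for every `j` and `k`, which irreducibility and
`x ≠ 0` rule out. For the spectral radius, if `M v = z v` with `v ≠ 0`, the vector `w = |v|`
satisfies `|z| w ≤ M w`; comparing `w` with the smallest multiple `c x` dominating it, at an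
index where `w = c x`, gives `|z| ≤ 1`.
-/

open Matrix Polynomial

namespace Matrix

variable {ι : Type*} [Fintype ι]

theorem exists_mulVec_eq_smul_of_isRoot_charpoly {K : Type*} [Field K] [DecidableEq ι]
    (A : Matrix ι ι K) {μ : K} (h : A.charpoly.IsRoot μ) : ∃ v ≠ 0, A *ᵥ v = μ • v := by
  rw [← mem_spectrum_iff_isRoot_charpoly, ← spectrum_toLin',
    ← Module.End.hasEigenvalue_iff_mem_spectrum] at h
  obtain ⟨v, hv⟩ := h.exists_hasEigenvector
  exact ⟨v, hv.2, hv.apply_eq_smul⟩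

section Nonneg

variable {M : Matrix ι ι ℝ}

theorem mulVec_mono_of_nonneg (hM : ∀ i j, 0 ≤ M i j) {v w : ι → ℝ} (h : v ≤ w) :
    M *ᵥ v ≤ M *ᵥ w := fun i =>
  Finset.sum_le_sum fun j _ => mul_le_mul_of_nonneg_left (h j) (hM i j)

theorem mul_le_mulVec_apply (hM : ∀ i j, 0 ≤ M i j) {x : ι → ℝ} (hx : 0 ≤ x) (i j : ι) :
    M i j * x j ≤ (M *ᵥ x) i :=
  Finset.single_le_sum (f := fun l => M i l * x l) (fun l _ => mul_nonneg (hM i l) (hx l))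
    (Finset.mem_univ j)

theorem norm_smul_le_mulVec_norm (hM : ∀ i j, 0 ≤ M i j) {z : ℂ} {v : ι → ℂ}
    (hv : M.map (algebraMap ℝ ℂ) *ᵥ v = z • v) :
    ‖z‖ • (fun i => ‖v i‖) ≤ M *ᵥ fun i => ‖v i‖ := fun i =>
  calc ‖z‖ * ‖v i‖ = ‖∑ j, (M i j : ℂ) * v j‖ := by
        rw [← norm_mul]; exact congrArg norm (congrFun hv i).symm
    _ ≤ ∑ j, ‖(M i j : ℂ) * v j‖ := norm_sum_le _ _
    _ = (M *ᵥ fun i => ‖v i‖) i := by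
        simp only [norm_mul, Complex.norm_real, Real.norm_of_nonneg (hM i _)]; rfl

theorem le_of_smul_le_mulVec_of_mulVec_le_smul (hM : ∀ i j, 0 ≤ M i j) {x w : ι → ℝ}
    {r s : ℝ} (hx : ∀ i, 0 < x i) (hMx : M *ᵥ x ≤ s • x) (hw : 0 ≤ w) (hw0 : w ≠ 0)
    (hMw : r • w ≤ M *ᵥ w) : r ≤ s := by
  obtain ⟨j, hj⟩ := Function.ne_iff.mp hw0
  obtain ⟨i, -, hi⟩ := Finset.exists_max_image Finset.univ (fun i => w i / x i)
    ⟨j, Finset.mem_univ j⟩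
  set c := w i / x i
  have hwc : w ≤ c • x := fun l => (div_le_iff₀ (hx l)).mp (hi l (Finset.mem_univ l))
  have hc : 0 < c := (div_pos ((hw j).lt_of_ne' hj) (hx j)).trans_le (hi j (Finset.mem_univ j))
  have hwi : 0 < w i := (div_pos_iff_of_pos_right (hx i)).mp hc
  refine le_of_mul_le_mul_right ?_ hwi
  calc r * w i ≤ (M *ᵥ w) i := hMw i
    _ ≤ (M *ᵥ (c • x)) i := mulVec_mono_of_nonneg hM hwc i
    _ = c * (M *ᵥ x) i := by rw [mulVec_smul]; rfl
    _ ≤ c * (s * x i) := mul_le_mul_of_nonneg_left (hMx i) hc.le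
    _ = s * w i := by rw [mul_left_comm, div_mul_cancel₀ _ (hx i).ne']

variable [DecidableEq ι]

theorem pow_mulVec_le_of_mulVec_le (hM : ∀ i j, 0 ≤ M i j) {x : ι → ℝ} (h : M *ᵥ x ≤ x)
    (k : ℕ) : M ^ k *ᵥ x ≤ x := by
  induction k with
  | zero => rw [pow_zero, one_mulVec]
  | succ k ih =>
    rw [pow_succ', ← mulVec_mulVec]
    exact (mulVec_mono_of_nonneg hM ih).trans h

theorem pos_of_mulVec_le (hM : ∀ i j, 0 ≤ M i j) (hirr : ∀ i j, ∃ k : ℕ, 0 < (M ^ k) i j)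
    {x : ι → ℝ} (hx : 0 ≤ x) (hx0 : x ≠ 0) (h : M *ᵥ x ≤ x) (i : ι) : 0 < x i := by
  obtain ⟨j, hj⟩ := Function.ne_iff.mp hx0
  obtain ⟨k, hk⟩ := hirr i j
  calc 0 < (M ^ k) i j * x j := mul_pos hk ((hx j).lt_of_ne' hj)
    _ ≤ (M ^ k *ᵥ x) i := mul_le_mulVec_apply (pow_apply_nonneg hM k) hx i j
    _ ≤ x i := pow_mulVec_le_of_mulVec_le hM h k i

end Nonneg

theorem specRad_le_of_mulVec_le_smul {n : ℕ} {M : Matrix (Fin n) (Fin n) ℝ} (hM : M.IsNonneg)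
    {x : Fin n → ℝ} (hx : ∀ i, 0 < x i) {s : ℝ} (hs : 0 ≤ s) (hMx : M *ᵥ x ≤ s • x) :
    M.specRad ≤ s := by
  refine Real.sSup_le ?_ hs
  rintro _ ⟨z, hz, rfl⟩
  have hroot : (M.map (algebraMap ℝ ℂ)).charpoly.IsRoot z := by
    rwa [charpoly_map, IsRoot, eval_map_algebraMap]
  obtain ⟨v, hv0, hv⟩ := exists_mulVec_eq_smul_of_isRoot_charpoly _ hroot
  have hw0 : (fun i => ‖v i‖) ≠ 0 := fun h => hv0 (funext fun i => norm_eq_zero.mp (congrFun h i))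
  exact le_of_smul_le_mulVec_of_mulVec_le_smul hM hx hMx (fun i => norm_nonneg _) hw0
    (norm_smul_le_mulVec_norm hM hv)

end Matrix

/-- If `(I - M) x = f` has a nonnegative nontrivial solution `x` (with `M` nonnegative
irreducible and `f` nonnegative), then `x` is entrywise positive and `ρ(M) ≤ 1`. -/
theorem shifted_system_positive_solution {n : ℕ}
    (M : Matrix (Fin n) (Fin n) ℝ) (hM : M.IsNonneg) (hirr : M.IsIrred)
    (f : Fin n → ℝ) (hf : ∀ i, 0 ≤ f i)
    (x : Fin n → ℝ) (hx : ∀ i, 0 ≤ x i) (hx0 : x ≠ 0)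
    (hsys : (1 - M).mulVec x = f) :
    (∀ i, 0 < x i) ∧ M.specRad ≤ 1 := by
  have hMx : M *ᵥ x ≤ x := by
    have hdiff : x - M *ᵥ x = f := by rwa [sub_mulVec, one_mulVec] at hsys
    exact sub_nonneg.mp (by rw [hdiff]; exact hf)
  have hpos : ∀ i, 0 < x i :=
    pos_of_mulVec_le hM (fun i j => (hirr i j).imp fun _ => And.right) hx hx0 hMx
  exact ⟨hpos, specRad_le_of_mulVec_le_smul hM hpos zero_le_one (by rwa [one_smul])⟩
end
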